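/- Let B be a category, F, G : B ⥤ Cat functors, α : F ⟶ G a natural transformation, and ∫α : ∫F ⥤ ∫G the induced functor on Grothendieck constructions. Then the following are equivalent: (1) there exist a functor L : ∫G ⥤ ∫F and an adjunction L ⊣ ∫α such that the projection ∫G ⥤ B sends every component of the unit of this adjunction to an isomorphism of B; (2) for every object b of B the functor α_b : F(b) ⥤ G(b) admits a left adjoint λ_b, and for every morphism f : b → b' of B the mate λ_{b'} ∘ G.map f ⟶ F.map f ∘ λ_b of the naturality square (G.map f) ∘ α_b = α_{b'} ∘ (F.map f), formed using chosen adjunctions λ_b ⊣ α_b and λ_{b'} ⊣ α_{b'}, is a natural isomorphism. (Condition (2) is independent of the choice of adjunctions, left adjoints being unique up to canonical isomorphism.) -/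

import Mathlib

/-!
An adjunction `L ⊣ ∫α` amounts to a universal arrow `X ⟶ ∫α (L X)` for every `X`. Composing with
the image of an isomorphism over the base, a universal arrow with invertible base becomes vertical,
i.e. the image `ι η` of a fibre morphism `η : x ⟶ α_b z`. Such an arrow is universal iff, for every
`f : b ⟶ b'`, the map `h ↦ G(f)(η) ≫ α_{b'}(h)` on morphisms over `f` is bijective. For `f = 𝟙`
this says that `η` is a universal arrow for `α_b`, i.e. the unit of an adjunction `λ_b ⊣ α_b`; for
general `f` the map is the transpose of precomposition with the mate at `f`, so its bijectivity
says that the mate is invertible.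
-/

open CategoryTheory Functor

universe v u v₁ u₁

variable {B : Type u₁} [Category.{v₁} B]

lemma Sigma.bijective_map_id_iff {α : Type*} {β₁ β₂ : α → Type*} (f : ∀ a, β₁ a → β₂ a) :
    Function.Bijective (Sigma.map id f) ↔ ∀ a, Function.Bijective (f a) := by
  refine ⟨fun h a => ⟨h.1.of_sigma_map a, fun t => ?_⟩,
    fun h => ⟨Function.injective_id.sigma_map fun a => (h a).1,
      Function.surjective_id.sigma_map fun a => (h a).2⟩⟩
  obtain ⟨⟨a', s⟩, hs⟩ := h.2 ⟨a, t⟩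
  obtain ⟨rfl, hst⟩ := Sigma.mk.inj_iff.1 hs
  exact ⟨s, eq_of_heq hst⟩

namespace CategoryTheory

section UniversalArrow

variable {C D : Type*} [Category C] [Category D]

def Functor.IsUniversalArrow (R : D ⥤ C) {X : C} {Z : D} (u : X ⟶ R.obj Z) : Prop :=
  ∀ Y : D, Function.Bijective fun φ : Z ⟶ Y => u ≫ R.map φ

lemma Adjunction.isUniversalArrow_unit {L : C ⥤ D} {R : D ⥤ C} (adj : L ⊣ R) (X : C) :
    R.IsUniversalArrow (adj.unit.app X) := fun Y => by
  have hunit : ⇑(adj.homEquiv X Y) = fun φ => adj.unit.app X ≫ R.map φ :=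
    funext (adj.homEquiv_unit X Y)
  exact hunit ▸ (adj.homEquiv X Y).bijective

lemma Adjunction.isIso_iff_bijective_homEquiv_comp {L : C ⥤ D} {R : D ⥤ C} (adj : L ⊣ R)
    {X : C} {Z : D} (m : L.obj X ⟶ Z) :
    IsIso m ↔ ∀ Y : D, Function.Bijective fun h : Z ⟶ Y => adj.homEquiv X Y (m ≫ h) := by
  rw [isIso_iff_coyoneda_map_bijective]
  exact forall_congr' fun Y => ((adj.homEquiv X Y).comp_bijective _).symm

lemma Functor.IsUniversalArrow.comp_map_iso {R : D ⥤ C} {X : C} {Z Z' : D} {u : X ⟶ R.obj Z}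
    (hu : R.IsUniversalArrow u) (c : Z ≅ Z') : R.IsUniversalArrow (u ≫ R.map c.hom) := fun Y => by
  have hc := (isIso_iff_coyoneda_map_bijective c.hom).1 inferInstance Y
  simp only [Category.assoc, ← Functor.map_comp]
  exact (hu Y).comp hc

section

variable {R : D ⥤ C} {Z : C → D} (u : ∀ X, X ⟶ R.obj (Z X)) (hu : ∀ X, R.IsUniversalArrow (u X))

noncomputable def Functor.leftAdjointOfIsUniversalArrow : C ⥤ D :=
  Adjunction.leftAdjointOfEquiv (fun X Y => Equiv.ofBijective _ (hu X Y)) fun X Y Y' g h => by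
    simp

noncomputable def Adjunction.ofIsUniversalArrow : R.leftAdjointOfIsUniversalArrow u hu ⊣ R :=
  Adjunction.adjunctionOfEquivLeft _ _

@[simp]
lemma Adjunction.ofIsUniversalArrow_unit_app (X : C) :
    (Adjunction.ofIsUniversalArrow u hu).unit.app X = u X := by
  change u X ≫ R.map (𝟙 _) = u X
  simp

end

lemma Functor.exists_adjunction_unit_mem_iff (R : D ⥤ C) (P : MorphismProperty C) :
    (∃ (L : C ⥤ D) (adj : L ⊣ R), ∀ X, P (adj.unit.app X)) ↔
      ∀ X : C, ∃ (Z : D) (u : X ⟶ R.obj Z), R.IsUniversalArrow u ∧ P u := by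
  refine ⟨fun ⟨L, adj, hP⟩ X => ⟨L.obj X, adj.unit.app X, adj.isUniversalArrow_unit X, hP X⟩,
    fun h => ?_⟩
  choose Z u hu hP using h
  exact ⟨_, Adjunction.ofIsUniversalArrow u hu, fun X => by
    rw [Adjunction.ofIsUniversalArrow_unit_app]; exact hP X⟩

end UniversalArrow

namespace Grothendieck

section

variable {F : B ⥤ Cat.{v, u}}

def homEquivSigma (X Y : Grothendieck F) :
    (X ⟶ Y) ≃ Σ f : X.base ⟶ Y.base, ((F.map f).toFunctor.obj X.fiber ⟶ Y.fiber) where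
  toFun φ := ⟨φ.base, φ.fiber⟩
  invFun p := ⟨p.1, p.2⟩
  left_inv _ := rfl
  right_inv _ := rfl

lemma bijective_mk_iff {F' : B ⥤ Cat.{v, u}} {b b' : B} {z : F.obj b} {y : F.obj b'}
    {x : F'.obj b} {w : F'.obj b'}
    (T : ∀ f : b ⟶ b', ((F.map f).toFunctor.obj z ⟶ y) → ((F'.map f).toFunctor.obj x ⟶ w)) :
    Function.Bijective (fun φ : (⟨b, z⟩ : Grothendieck F) ⟶ ⟨b', y⟩ =>
        (⟨φ.base, T φ.base φ.fiber⟩ : (⟨b, x⟩ : Grothendieck F') ⟶ ⟨b', w⟩)) ↔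
      ∀ f, Function.Bijective (T f) := by
  rw [← Sigma.bijective_map_id_iff, ← (homEquivSigma _ _).comp_bijective,
    ← (homEquivSigma _ _).symm.bijective_comp]
  rfl

lemma exists_ι_map_eq {b : B} {x w : F.obj b} (ψ : (⟨b, x⟩ : Grothendieck F) ⟶ ⟨b, w⟩)
    (hψ : ψ.base = 𝟙 b) : ∃ η : x ⟶ w, (ι F b).map η = ψ :=
  ⟨eqToHom (by rw [hψ]; simp) ≫ ψ.fiber, Grothendieck.ext _ _ hψ.symm (by
    simp [ι]
    erw [eqToHom_trans_assoc, eqToHom_refl, Category.id_comp])⟩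

end

variable {F G : B ⥤ Cat.{v, u}} (α : F ⟶ G)

def fiberTranspose {b b' : B} {x : G.obj b} {z : F.obj b} (η : x ⟶ (α.app b).toFunctor.obj z)
    (f : b ⟶ b') {y : F.obj b'} (h : (F.map f).toFunctor.obj z ⟶ y) :
    (G.map f).toFunctor.obj x ⟶ (α.app b').toFunctor.obj y :=
  (G.map f).toFunctor.map η ≫
    eqToHom (Functor.congr_obj (congrArg Cat.Hom.toFunctor (α.naturality f)) z).symm ≫
    (α.app b').toFunctor.map h

lemma ι_map_comp_map_map {b : B} {x : G.obj b} {z : F.obj b} (η : x ⟶ (α.app b).toFunctor.obj z)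
    {Y : Grothendieck F} (φ : (⟨b, z⟩ : Grothendieck F) ⟶ Y) :
    (ι G b).map η ≫ (map α).map φ = ⟨φ.base, fiberTranspose α η φ.base φ.fiber⟩ := by
  -- `simp` cannot see through `ι` and `map` in the dependent fibre types, so both morphisms are
  -- first unfolded to constructor form.
  change @Eq ((⟨b, x⟩ : Grothendieck G) ⟶ ⟨Y.base, (α.app Y.base).toFunctor.obj Y.fiber⟩)
    ((⟨𝟙 b, eqToHom (by simp) ≫ η⟩ :
        (⟨b, x⟩ : Grothendieck G) ⟶ ⟨b, (α.app b).toFunctor.obj z⟩) ≫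
      (⟨φ.base, (eqToHom (α.naturality φ.base).symm).toNatTrans.app z ≫
          (α.app Y.base).toFunctor.map φ.fiber⟩ :
        (⟨b, (α.app b).toFunctor.obj z⟩ : Grothendieck G) ⟶
          ⟨Y.base, (α.app Y.base).toFunctor.obj Y.fiber⟩))
      ⟨φ.base, fiberTranspose α η φ.base φ.fiber⟩
  refine Grothendieck.ext _ _ (Category.id_comp _) ?_
  simp [fiberTranspose, eqToHom_map]
  erw [eqToHom_trans_assoc, eqToHom_trans_assoc, eqToHom_refl, Category.id_comp]

lemma isUniversalArrow_ι_map_iff {b : B} {x : G.obj b} {z : F.obj b}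
    (η : x ⟶ (α.app b).toFunctor.obj z) :
    (map α).IsUniversalArrow (Z := ⟨b, z⟩) ((ι G b).map η) ↔
      ∀ (b' : B) (y : F.obj b') (f : b ⟶ b'),
        Function.Bijective (fiberTranspose α η f (y := y)) := by
  have hcomp : ∀ (b' : B) (y : F.obj b'),
      (fun φ : (⟨b, z⟩ : Grothendieck F) ⟶ ⟨b', y⟩ => (ι G b).map η ≫ (map α).map φ) =
        fun φ => ⟨φ.base, fiberTranspose α η φ.base φ.fiber⟩ :=
    fun b' y => funext (ι_map_comp_map_map α η)
  refine ⟨fun h b' y => ?_, fun h ⟨b', y⟩ => ?_⟩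
  · exact (bijective_mk_iff _).1 (hcomp b' y ▸ h ⟨b', y⟩)
  · exact hcomp b' y ▸ (bijective_mk_iff _).2 (h b' y)

lemma exists_isUniversalArrow_ι_map {X : Grothendieck G} {Z : Grothendieck F}
    {u : X ⟶ (map α).obj Z} (hu : (map α).IsUniversalArrow u) (hbase : IsIso u.base) :
    ∃ (z : F.obj X.base) (η : X.fiber ⟶ (α.app X.base).toFunctor.obj z),
      (map α).IsUniversalArrow (Z := ⟨X.base, z⟩) ((ι G X.base).map η) := by
  let e := asIso u.base
  have hv := hu.comp_map_iso (Z.transportIso e.symm).symm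
  obtain ⟨η, hη⟩ := exists_ι_map_eq (b := X.base) (x := X.fiber)
    (w := (α.app X.base).toFunctor.obj ((F.map e.inv).toFunctor.obj Z.fiber))
    (u ≫ (map α).map (Z.transportIso e.symm).symm.hom) e.hom_inv_id
  exact ⟨_, η, hη ▸ hv⟩

lemma bijective_comp_map_of_bijective_fiberTranspose_id {b : B} {x : G.obj b} {z y : F.obj b}
    (η : x ⟶ (α.app b).toFunctor.obj z)
    (h : Function.Bijective (fiberTranspose α η (𝟙 b) (y := y))) :
    Function.Bijective fun k : z ⟶ y => η ≫ (α.app b).toFunctor.map k := by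
  have hx : x = (G.map (𝟙 b)).toFunctor.obj x := by simp
  have hz : (F.map (𝟙 b)).toFunctor.obj z = z := by simp
  have hfactor : (fun k : z ⟶ y => η ≫ (α.app b).toFunctor.map k) =
      (fun t => eqToHom hx ≫ t) ∘ fiberTranspose α η (𝟙 b) ∘ (fun k => eqToHom hz ≫ k) := by
    funext k
    simp [fiberTranspose, eqToHom_map,
      Functor.congr_hom (congrArg Cat.Hom.toFunctor (G.map_id b)) η]
  rw [hfactor]
  exact ((isIso_iff_coyoneda_map_bijective _).1 inferInstance _).comp
    (h.comp ((isIso_iff_coyoneda_map_bijective _).1 inferInstance _))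

section Mates

variable {l : ∀ b : B, ↑(G.obj b) ⥤ ↑(F.obj b)} (adjs : ∀ b : B, l b ⊣ (α.app b).toFunctor)

def beckChevalley {b b' : B} (f : b ⟶ b') :
    (G.map f).toFunctor ⋙ l b' ⟶ l b ⋙ (F.map f).toFunctor :=
  (mateEquiv (adjs b) (adjs b')).symm (eqToHom (congrArg Cat.Hom.toFunctor (α.naturality f).symm))

lemma homEquiv_beckChevalley_app_comp {b b' : B} (f : b ⟶ b') (x : G.obj b) {y : F.obj b'}
    (h : (F.map f).toFunctor.obj ((l b).obj x) ⟶ y) :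
    (adjs b').homEquiv _ _ ((beckChevalley α adjs f).app x ≫ h) =
      fiberTranspose α ((adjs b).unit.app x) f h := by
  have hunit : (G.map f).toFunctor.map ((adjs b).unit.app x) ≫ eqToHom
        (Functor.congr_obj (congrArg Cat.Hom.toFunctor (α.naturality f)) ((l b).obj x)).symm =
      (adjs b').unit.app _ ≫ (α.app b').toFunctor.map ((beckChevalley α adjs f).app x) := by
    simpa [eqToHom_app, beckChevalley] using unit_mateEquiv_symm (adjs b) (adjs b')
      (eqToHom (congrArg Cat.Hom.toFunctor (α.naturality f).symm)) x
  rw [Adjunction.homEquiv_unit, Functor.map_comp, ← Category.assoc, ← hunit]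
  simp [fiberTranspose]

end Mates

lemma exists_adjunctions_beckChevalley_iso_iff :
    (∃ (l : ∀ b : B, ↑(G.obj b) ⥤ ↑(F.obj b)) (adjs : ∀ b : B, l b ⊣ (α.app b).toFunctor),
        ∀ {b b' : B} (f : b ⟶ b'), IsIso (beckChevalley α adjs f)) ↔
      ∀ (b : B) (x : G.obj b), ∃ (z : F.obj b) (η : x ⟶ (α.app b).toFunctor.obj z),
        ∀ (b' : B) (y : F.obj b') (f : b ⟶ b'),
          Function.Bijective (fiberTranspose α η f (y := y)) := by
  constructor
  · rintro ⟨l, adjs, hiso⟩ b x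
    refine ⟨(l b).obj x, (adjs b).unit.app x, fun b' y f => ?_⟩
    have hbij :=
      ((adjs b').isIso_iff_bijective_homEquiv_comp ((beckChevalley α adjs f).app x)).1
        inferInstance y
    simp only [homEquiv_beckChevalley_app_comp] at hbij
    exact hbij
  · intro h
    choose z η hη using h
    have hfib : ∀ b x, (α.app b).toFunctor.IsUniversalArrow (η b x) := fun b x y =>
      bijective_comp_map_of_bijective_fiberTranspose_id α (η b x) (hη b x b y (𝟙 b))
    let adjs b := Adjunction.ofIsUniversalArrow (η b) (hfib b)
    refine ⟨_, adjs, fun {b b'} f => ?_⟩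
    rw [NatTrans.isIso_iff_isIso_app]
    intro x
    rw [(adjs b').isIso_iff_bijective_homEquiv_comp]
    intro y
    have hunit : (adjs b).unit.app x = η b x := Adjunction.ofIsUniversalArrow_unit_app _ _ x
    simp only [homEquiv_beckChevalley_app_comp, hunit]
    exact hη b x b' y f

end Grothendieck

end CategoryTheory

/-- For a natural transformation `α : F ⟶ G` of functors `F G : B ⥤ Cat`, the induced functor
`∫α : ∫F ⥤ ∫G` on Grothendieck constructions admits a left adjoint whose adjunction unit has
all of its components sent to isomorphisms by the projection `∫G ⥤ B` if and only if every
component `α.app b : F(b) ⥤ G(b)` admits a left adjoint `l b` and, for every morphism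
`f : b ⟶ b'` of `B`, the mate `l b' ∘ G.map f ⟶ F.map f ∘ l b` of the naturality square
`G.map f ∘ α.app b = α.app b' ∘ F.map f` (formed using chosen adjunctions `l b ⊣ α.app b` and
`l b' ⊣ α.app b'`) is a natural isomorphism. -/
theorem grothendieck_map_right_adjoint_iff_fiberwise_and_mates
    (F G : B ⥤ Cat.{v, u}) (α : F ⟶ G) :
    (∃ (L : Grothendieck G ⥤ Grothendieck F) (adj : L ⊣ Grothendieck.map α),
        ∀ X : Grothendieck G, IsIso ((Grothendieck.forget G).map (adj.unit.app X))) ↔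
      ∃ (l : ∀ b : B, ↑(G.obj b) ⥤ ↑(F.obj b)) (adjs : ∀ b : B, l b ⊣ (α.app b).toFunctor),
        ∀ {b b' : B} (f : b ⟶ b'),
          IsIso ((mateEquiv (adjs b) (adjs b')).symm (eqToHom (congrArg Cat.Hom.toFunctor (α.naturality f).symm))) := by
  refine (Functor.exists_adjunction_unit_mem_iff (Grothendieck.map α)
    fun _ _ u => IsIso ((Grothendieck.forget G).map u)).trans
    (Iff.trans ?_ (Grothendieck.exists_adjunctions_beckChevalley_iso_iff α).symm)
  constructor
  · intro h b x
    obtain ⟨Z, u, hu, hbase⟩ := h ⟨b, x⟩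
    obtain ⟨z, η, hη⟩ := Grothendieck.exists_isUniversalArrow_ι_map α hu hbase
    exact ⟨z, η, (Grothendieck.isUniversalArrow_ι_map_iff α η).1 hη⟩
  · intro h X
    obtain ⟨z, η, hη⟩ := h X.base X.fiber
    exact ⟨⟨X.base, z⟩, (Grothendieck.ι G X.base).map η,
      (Grothendieck.isUniversalArrow_ι_map_iff α η).2 hη, inferInstanceAs (IsIso (𝟙 X.base))⟩
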